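/- (Corollary 3.2(d).) If S is independent of (R(1),R(0)), and in addition either (i) (Y(1),Y(0)) is independent of (R(1),R(0)), or (ii) (Y(1),Y(0)) is conditionally independent of (R(1),R(0)) given S, then theta_sfe = theta = E[Y(1) - Y(0)]. -/

import Mathlib

open MeasureTheory ProbabilityTheory

/-!
Since `S` is independent of `R = (R(1), R(0))`, `E[R(d) | S]` is a.s. the constant `E[R(d)]`, so all
strata carry the same weight and `Λ`, as well as the denominator of the integrand, are constants.
The numerator integrates to `E[R(d) Y(d)] = E[R(d)] E[Y(d)]`, which needs `Y(d) ⊥ R(d)`. In case (ii)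
this comes from integrating `P[A ∩ B | S] = P[A | S] P[B | S]`: for `B ∈ σ(R)` the factor `P[B | S]`
is the constant `P[B]`, so conditional independence given `S` becomes unconditional independence.
-/

namespace ProbabilityTheory

variable {Ω : Type*} {mΩ : MeasurableSpace Ω} {μ : Measure Ω}

theorem condExp_indicator_ae_eq_measureReal_of_indep {m m₁ : MeasurableSpace Ω}
    (hm : m ≤ mΩ) (hm₁ : m₁ ≤ mΩ) [SigmaFinite (μ.trim hm)] {t : Set Ω}
    (ht : MeasurableSet[m₁] t) (h : Indep m₁ m μ) :
    μ⟦t | m⟧ =ᵐ[μ] fun _ => μ.real t := by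
  have := condExp_indep_eq hm₁ hm ((stronglyMeasurable_const (b := (1 : ℝ))).indicator ht) h
  rwa [integral_indicator_const _ (hm₁ t ht), smul_eq_mul, mul_one] at this

theorem CondIndep.indep_of_indep [StandardBorelSpace Ω] [IsFiniteMeasure μ]
    {m' m₁ m₂ : MeasurableSpace Ω} {hm' : m' ≤ mΩ} (hm₁ : m₁ ≤ mΩ) (hm₂ : m₂ ≤ mΩ)
    (h : CondIndep m' m₁ m₂ hm' μ) (h₂ : Indep m₂ m' μ) : Indep m₁ m₂ μ := by
  rw [Indep_iff]
  intro s t hs ht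
  have hst := (condIndep_iff m' m₁ m₂ hm' hm₁ hm₂ μ).mp h s t hs ht
  have ht' := condExp_indicator_ae_eq_measureReal_of_indep hm' hm₂ ht h₂
  have hreal : μ.real (s ∩ t) = μ.real s * μ.real t := by
    calc μ.real (s ∩ t) = ∫ ω, (μ⟦s ∩ t | m'⟧) ω ∂μ := by
          rw [integral_condExp hm', integral_indicator_const _ ((hm₁ s hs).inter (hm₂ t ht)),
            smul_eq_mul, mul_one]
      _ = ∫ ω, (μ⟦s | m'⟧) ω * μ.real t ∂μ := by
          refine integral_congr_ae ?_
          filter_upwards [hst, ht'] with ω hω hωt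
          rw [hω, Pi.mul_apply, hωt]
      _ = μ.real s * μ.real t := by
          rw [integral_mul_const, integral_condExp hm', integral_indicator_const _ (hm₁ s hs),
            smul_eq_mul, mul_one]
  simp only [measureReal_def, ← ENNReal.toReal_mul] at hreal
  exact (ENNReal.toReal_eq_toReal_iff' (measure_ne_top _ _) (by finiteness)).mp hreal

theorem CondIndepFun.indepFun_of_indep [StandardBorelSpace Ω] [IsFiniteMeasure μ]
    {β γ : Type*} [mβ : MeasurableSpace β] [mγ : MeasurableSpace γ] {f : Ω → β} {g : Ω → γ}
    (hf : Measurable f) (hg : Measurable g) {m' : MeasurableSpace Ω} {hm' : m' ≤ mΩ}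
    (h : CondIndepFun m' hm' f g μ) (hgm : Indep (mγ.comap g) m' μ) : IndepFun f g μ :=
  (IndepFun_iff_Indep f g μ).mpr <|
    ((condIndepFun_iff_condIndep m' hm' f g μ).mp h).indep_of_indep hf.comap_le hg.comap_le hgm

theorem IndepFun.fin_two_apply {β : Type*} [MeasurableSpace β] {X Z : Fin 2 → Ω → β}
    (h : IndepFun (fun ω => (X 1 ω, X 0 ω)) (fun ω => (Z 1 ω, Z 0 ω)) μ) (d : Fin 2) :
    IndepFun (X d) (Z d) μ := by
  fin_cases d
  · exact h.comp measurable_snd measurable_snd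
  · exact h.comp measurable_fst measurable_fst

end ProbabilityTheory

theorem measurable_comap_fin_two_pair {Ω β : Type*} [mβ : MeasurableSpace β]
    (X : Fin 2 → Ω → β) (d : Fin 2) :
    Measurable[mβ.prod mβ |>.comap fun ω => (X 1 ω, X 0 ω)] (X d) := by
  fin_cases d
  · exact measurable_snd.comp (comap_measurable _)
  · exact measurable_fst.comp (comap_measurable _)

theorem corollary_3_2_d_general
    {Ω : Type*} [MeasurableSpace Ω] [StandardBorelSpace Ω]
    (μ : Measure Ω) [IsProbabilityMeasure μ]
    {𝒮 : Type*} [MeasurableSpace 𝒮]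
    (Y : Fin 2 → Ω → ℝ) (R : Fin 2 → Ω → ℝ) (S : Ω → 𝒮)
    (hYmeas : ∀ d, Measurable (Y d)) (hRmeas : ∀ d, Measurable (R d))
    (hYint : ∀ d, Integrable (Y d) μ)
    (ν : ℝ)
    (hle : MeasurableSpace.comap S inferInstance ≤ ‹MeasurableSpace Ω›)
    (q : Fin 2 → 𝒮 → ℝ) (qy : Fin 2 → 𝒮 → ℝ)
    (hq : ∀ d, μ[R d | MeasurableSpace.comap S inferInstance]
      =ᵐ[μ] fun ω => q d (S ω))
    (hqy : ∀ d, μ[fun ω => R d ω * Y d ω | MeasurableSpace.comap S inferInstance]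
      =ᵐ[μ] fun ω => qy d (S ω))
    (Λ : ℝ)
    (hΛ : Λ = ∫ ω, q 1 (S ω) * q 0 (S ω) / (ν * q 1 (S ω) + (1 - ν) * q 0 (S ω)) ∂μ)
    (hΛpos : 0 < Λ)
    (hindepS : IndepFun S (fun ω => (R 1 ω, R 0 ω)) μ)
    (heither : IndepFun (fun ω => (Y 1 ω, Y 0 ω)) (fun ω => (R 1 ω, R 0 ω)) μ ∨
      CondIndepFun (MeasurableSpace.comap S inferInstance) hle
        (fun ω => (Y 1 ω, Y 0 ω)) (fun ω => (R 1 ω, R 0 ω)) μ) :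
    Λ⁻¹ * ∫ ω, (qy 1 (S ω) * q 0 (S ω) - qy 0 (S ω) * q 1 (S ω))
        / (ν * q 1 (S ω) + (1 - ν) * q 0 (S ω)) ∂μ
      = ∫ ω, (Y 1 ω - Y 0 ω) ∂μ := by
  have hRpair : Measurable fun ω => (R 1 ω, R 0 ω) := (hRmeas 1).prodMk (hRmeas 0)
  have hSR : Indep (MeasurableSpace.comap (fun ω => (R 1 ω, R 0 ω)) inferInstance)
      (MeasurableSpace.comap S inferInstance) μ :=
    (IndepFun_iff_Indep _ _ μ).mp hindepS.symm
  have hYR : IndepFun (fun ω => (Y 1 ω, Y 0 ω)) (fun ω => (R 1 ω, R 0 ω)) μ :=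
    heither.elim id fun h => h.indepFun_of_indep ((hYmeas 1).prodMk (hYmeas 0)) hRpair hSR
  set p : Fin 2 → ℝ := fun d => ∫ ω, R d ω ∂μ
  have hq_const (d : Fin 2) : (fun ω => q d (S ω)) =ᵐ[μ] fun _ => p d :=
    (hq d).symm.trans <| condExp_indep_eq hRpair.comap_le hle
      (measurable_comap_fin_two_pair R d).stronglyMeasurable hSR
  have hqy_integrable (d : Fin 2) : Integrable (fun ω => qy d (S ω)) μ :=
    integrable_condExp.congr (hqy d)
  have hqy_integral (d : Fin 2) : ∫ ω, qy d (S ω) ∂μ = p d * ∫ ω, Y d ω ∂μ := by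
    rw [← integral_congr_ae (hqy d), integral_condExp hle]
    exact (hYR.fin_two_apply d).symm.integral_mul_eq_mul_integral
      (hRmeas d).aestronglyMeasurable (hYint d).aestronglyMeasurable
  set D := ν * p 1 + (1 - ν) * p 0
  have hΛ_eq : Λ = p 1 * p 0 / D := by
    rw [hΛ, integral_congr_ae (g := fun _ => p 1 * p 0 / D) ?_, integral_const, probReal_univ,
      one_smul]
    filter_upwards [hq_const 1, hq_const 0] with ω h1 h0
    rw [h1, h0]
  have hnum : ∫ ω, (qy 1 (S ω) * q 0 (S ω) - qy 0 (S ω) * q 1 (S ω))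
      / (ν * q 1 (S ω) + (1 - ν) * q 0 (S ω)) ∂μ
      = (p 1 * (∫ ω, Y 1 ω ∂μ) * p 0 - p 0 * (∫ ω, Y 0 ω ∂μ) * p 1) / D := by
    rw [integral_congr_ae (g := fun ω => (qy 1 (S ω) * p 0 - qy 0 (S ω) * p 1) / D) ?_,
      integral_div, integral_sub ((hqy_integrable 1).mul_const _) ((hqy_integrable 0).mul_const _),
      integral_mul_const, integral_mul_const, hqy_integral 1, hqy_integral 0]
    filter_upwards [hq_const 1, hq_const 0] with ω h1 h0
    rw [h1, h0]
  obtain ⟨⟨hp1, hp0⟩, hD⟩ : (p 1 ≠ 0 ∧ p 0 ≠ 0) ∧ D ≠ 0 := by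
    simpa [hΛ_eq, not_or] using hΛpos.ne'
  rw [hnum, hΛ_eq, integral_sub (hYint 1) (hYint 0)]
  field_simp

/-- Corollary 3.2(d): if `S` is independent of `(R(1), R(0))`, and in addition either
(i) `(Y(1), Y(0))` is independent of `(R(1), R(0))`, or (ii) `(Y(1), Y(0))` is conditionally
independent of `(R(1), R(0))` given `S`, then `θ_sfe = θ = E[Y(1) - Y(0)]`.
Here `q d` and `qy d` are versions of `E[R(d)|S=·]` and `E[R(d)Y(d)|S=·]`. -/
theorem corollary_3_2_d
    {Ω : Type*} [MeasurableSpace Ω] [StandardBorelSpace Ω] [Nonempty Ω]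
    (μ : Measure Ω) [IsProbabilityMeasure μ]
    {𝒮 : Type*} [Fintype 𝒮] [MeasurableSpace 𝒮] [MeasurableSingletonClass 𝒮]
    (Y : Fin 2 → Ω → ℝ) (R : Fin 2 → Ω → ℝ) (S : Ω → 𝒮)
    (hYmeas : ∀ d, Measurable (Y d)) (hRmeas : ∀ d, Measurable (R d))
    (hSmeas : Measurable S)
    (hR01 : ∀ d ω, R d ω = 0 ∨ R d ω = 1)
    (hYint : ∀ d, Integrable (Y d) μ)
    (hRpos : ∀ d, 0 < ∫ ω, R d ω ∂μ)
    (ν : ℝ) (hν : 0 < ν ∧ ν < 1)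
    (hle : MeasurableSpace.comap S inferInstance ≤ ‹MeasurableSpace Ω›)
    (q : Fin 2 → 𝒮 → ℝ) (qy : Fin 2 → 𝒮 → ℝ)
    (hq : ∀ d, μ[R d | MeasurableSpace.comap S inferInstance]
      =ᵐ[μ] fun ω => q d (S ω))
    (hqy : ∀ d, μ[fun ω => R d ω * Y d ω | MeasurableSpace.comap S inferInstance]
      =ᵐ[μ] fun ω => qy d (S ω))
    (Λ : ℝ)
    (hΛ : Λ = ∫ ω, q 1 (S ω) * q 0 (S ω) / (ν * q 1 (S ω) + (1 - ν) * q 0 (S ω)) ∂μ)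
    (hΛpos : 0 < Λ)
    (hindepS : IndepFun S (fun ω => (R 1 ω, R 0 ω)) μ)
    (heither : IndepFun (fun ω => (Y 1 ω, Y 0 ω)) (fun ω => (R 1 ω, R 0 ω)) μ ∨
      CondIndepFun (MeasurableSpace.comap S inferInstance) hle
        (fun ω => (Y 1 ω, Y 0 ω)) (fun ω => (R 1 ω, R 0 ω)) μ) :
    Λ⁻¹ * ∫ ω, (qy 1 (S ω) * q 0 (S ω) - qy 0 (S ω) * q 1 (S ω))
        / (ν * q 1 (S ω) + (1 - ν) * q 0 (S ω)) ∂μ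
      = ∫ ω, (Y 1 ω - Y 0 ω) ∂μ :=
  corollary_3_2_d_general μ Y R S hYmeas hRmeas hYint ν hle q qy hq hqy Λ hΛ hΛpos hindepS heither
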